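/- The quantity g̃ := v^⊤ζ̃ satisfies 0 ≤ g̃ ≤ ψ_max·‖v‖², where ψ_max = max(ψ_ν,ψ_σ,ψ_η,ψ_ξ) and ‖·‖ is the Euclidean norm on ℝ⁴. -/

import Mathlib

open Finset

noncomputable section

namespace Stmt10

/-- The Euclidean norm of a vector in `ℝ^m`. -/
def enorm {m : ℕ} (z : Fin m → ℝ) : ℝ := Real.sqrt (∑ i, z i ^ 2)

/-- The reference control `ζ⁰(Σ) = (0, Σ, 0, 0)`. -/
def zeta0 (Sig : ℝ) : Fin 4 → ℝ := ![0, Sig, 0, 0]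

/-- The fourth standard basis vector `e₄` of `ℝ⁴`. -/
def e4 : Fin 4 → ℝ := fun i => if i = 3 then 1 else 0

/-- `c^⊤ Ψ v` for the diagonal matrix `Ψ = diag psi`. -/
def cPv (psi c v : Fin 4 → ℝ) : ℝ := ∑ i, c i * psi i * v i

/-- `c^⊤ Ψ c` for the diagonal matrix `Ψ = diag psi`. -/
def cPc (psi c : Fin 4 → ℝ) : ℝ := ∑ i, c i * psi i * c i

/-- The Lagrange multiplier `λ`. -/
def lam (psi c v : Fin 4 → ℝ) : ℝ :=
  if 0 ≤ v 3 - cPv psi c v / cPc psi c * c 3 then cPv psi c v / cPc psi c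
  else (cPv psi c v - c 3 * v 3 * psi 3) / (cPc psi c - c 3 ^ 2 * psi 3)

/-- The Lagrange multiplier `μ = max (-(v₄ - λ c₄)) 0`. -/
def mu (psi c v : Fin 4 → ℝ) : ℝ := max (-(v 3 - lam psi c v * c 3)) 0

/-- `ζ̃ = Ψ (v - λ c + μ e₄)`. -/
def zetaTilde (psi c v : Fin 4 → ℝ) : Fin 4 → ℝ := fun i =>
  psi i * (v i - lam psi c v * c i + mu psi c v * e4 i)

/-- `H₁(ζ) = (1/(2ψ)) (ζ - ζ⁰(Σ))^⊤ Ψ⁻¹ (ζ - ζ⁰(Σ)) - v^⊤ (ζ - ζ⁰(Σ))`. -/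
def H1 (Sig ψ : ℝ) (psi v : Fin 4 → ℝ) (z : Fin 4 → ℝ) : ℝ :=
  (1 / (2 * ψ)) * ∑ i, (z i - zeta0 Sig i) ^ 2 / psi i -
    ∑ i, v i * (z i - zeta0 Sig i)

/-- `ψ_max = max(ψ_ν, ψ_σ, ψ_η, ψ_ξ)`. -/
def psiMax (psi : Fin 4 → ℝ) : ℝ := Finset.univ.sup' Finset.univ_nonempty psi

/-!
Write `w = v - λc + μe₄`, so that `ζ̃ = Ψw`. The multipliers are the KKT multipliers of the
`Ψ⁻¹`-projection onto `{c^⊤ζ = 0, ζ₄ ≥ 0}`: `λ` makes `c^⊤Ψw = 0` and `μ w₄ = 0`. Hence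
`v - w = λc - μe₄` is `Ψ`-orthogonal to `w`, so `g̃ = v^⊤Ψw = w^⊤Ψw ≥ 0`, and by Pythagoras
`v^⊤Ψv = g̃ + (v - w)^⊤Ψ(v - w) ≥ g̃`, while `v^⊤Ψv ≤ ψ_max ‖v‖²`.
-/

section WeightedProjection

variable {ι : Type*} [Fintype ι] {psi v w : ι → ℝ}

theorem sum_mul_weighted_eq_of_orthogonal
    (horth : ∑ i, (v i - w i) * psi i * w i = 0) :
    ∑ i, v i * (psi i * w i) = ∑ i, psi i * w i ^ 2 := by
  have hsplit : ∑ i, v i * (psi i * w i) - ∑ i, psi i * w i ^ 2 =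
      ∑ i, (v i - w i) * psi i * w i := by
    rw [← sum_sub_distrib]
    exact sum_congr rfl fun i _ => by ring
  linarith

theorem sum_mul_weighted_bounds_of_orthogonal (hpsi : ∀ i, 0 ≤ psi i)
    (horth : ∑ i, (v i - w i) * psi i * w i = 0) :
    0 ≤ ∑ i, v i * (psi i * w i) ∧ ∑ i, v i * (psi i * w i) ≤ ∑ i, psi i * v i ^ 2 := by
  have hg := sum_mul_weighted_eq_of_orthogonal horth
  have hpythagoras : ∑ i, psi i * v i ^ 2 - ∑ i, v i * (psi i * w i) =
      ∑ i, psi i * (v i - w i) ^ 2 + ∑ i, (v i - w i) * psi i * w i := by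
    rw [← sum_sub_distrib, ← sum_add_distrib]
    exact sum_congr rfl fun i _ => by ring
  have hsq_nonneg : ∀ u : ι → ℝ, 0 ≤ ∑ i, psi i * u i ^ 2 := fun u =>
    sum_nonneg fun i _ => mul_nonneg (hpsi i) (sq_nonneg (u i))
  exact ⟨hg ▸ hsq_nonneg w, by linarith [hsq_nonneg fun i => v i - w i]⟩

theorem sum_mul_sq_le_sup'_mul_sum_sq (h : (univ : Finset ι).Nonempty) (psi v : ι → ℝ) :
    ∑ i, psi i * v i ^ 2 ≤ univ.sup' h psi * ∑ i, v i ^ 2 := by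
  rw [mul_sum]
  gcongr with i
  exact le_sup' psi (mem_univ i)

end WeightedProjection

theorem enorm_sq {m : ℕ} (z : Fin m → ℝ) : enorm z ^ 2 = ∑ i, z i ^ 2 :=
  Real.sq_sqrt (sum_nonneg fun i _ => sq_nonneg (z i))

def residual (psi c v : Fin 4 → ℝ) : Fin 4 → ℝ := fun i =>
  v i - lam psi c v * c i + mu psi c v * e4 i

section Multipliers

variable {psi c : Fin 4 → ℝ} (v : Fin 4 → ℝ)

theorem cPc_sub_pos (hpsi : ∀ i, 0 < psi i) (hc : c 0 ≠ 0) :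
    0 < cPc psi c - c 3 ^ 2 * psi 3 := by
  have hp0 := hpsi 0; have hp1 := hpsi 1; have hp2 := hpsi 2
  have h0 : 0 < c 0 ^ 2 * psi 0 := by positivity
  have h1 : 0 ≤ c 1 ^ 2 * psi 1 := by positivity
  have h2 : 0 ≤ c 2 ^ 2 * psi 2 := by positivity
  simp only [cPc, Fin.sum_univ_four]
  linarith

theorem cPc_pos (hpsi : ∀ i, 0 < psi i) (hc : c 0 ≠ 0) : 0 < cPc psi c := by
  have := hpsi 3
  linarith [cPc_sub_pos hpsi hc, (by positivity : 0 ≤ c 3 ^ 2 * psi 3)]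

theorem mu_mul_residual_three : mu psi c v * residual psi c v 3 = 0 := by
  simp only [residual, e4, if_pos, mul_one]
  rcases le_total (v 3 - lam psi c v * c 3) 0 with h | h
  · rw [mu, max_eq_left (by linarith)]
    ring
  · rw [mu, max_eq_right (by linarith), zero_mul]

theorem cPv_sub_lam_mul_cPc_add_mu (hpsi : ∀ i, 0 < psi i) (hc : c 0 ≠ 0) :
    cPv psi c v - lam psi c v * cPc psi c + mu psi c v * (c 3 * psi 3) = 0 := by
  have hA := (cPc_pos hpsi hc).ne'
  have hA₃ := (cPc_sub_pos hpsi hc).ne'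
  by_cases hfree : 0 ≤ v 3 - cPv psi c v / cPc psi c * c 3
  · have hlam : lam psi c v = cPv psi c v / cPc psi c := if_pos hfree
    have hmu : mu psi c v = 0 := by
      rw [mu, hlam]
      exact max_eq_right (by linarith)
    rw [hlam, hmu]
    field_simp
    ring
  · have hlam : lam psi c v =
        (cPv psi c v - c 3 * v 3 * psi 3) / (cPc psi c - c 3 ^ 2 * psi 3) := if_neg hfree
    have hactive : v 3 - lam psi c v * c 3 < 0 := by
      have hrescale : v 3 - lam psi c v * c 3 = cPc psi c *
          (v 3 - cPv psi c v / cPc psi c * c 3) / (cPc psi c - c 3 ^ 2 * psi 3) := by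
        rw [hlam]
        field_simp
        ring
      rw [hrescale]
      exact div_neg_of_neg_of_pos (mul_neg_of_pos_of_neg (cPc_pos hpsi hc) (not_le.mp hfree))
        (cPc_sub_pos hpsi hc)
    rw [mu, max_eq_left (by linarith), hlam]
    field_simp
    ring

theorem sum_sub_residual_mul_psi_mul_residual (hpsi : ∀ i, 0 < psi i) (hc : c 0 ≠ 0) :
    ∑ i, (v i - residual psi c v i) * psi i * residual psi c v i = 0 := by
  have horth := cPv_sub_lam_mul_cPc_add_mu v hpsi hc
  have hslack := mu_mul_residual_three (psi := psi) (c := c) v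
  simp only [residual, cPv, cPc, e4, Fin.sum_univ_four] at horth hslack ⊢
  simp only [Fin.reduceEq, if_false, if_true, mul_zero, add_zero, mul_one] at hslack ⊢
  linear_combination lam psi c v * horth - psi 3 * hslack

end Multipliers

theorem gTilde_bounds_general
    (psi c v : Fin 4 → ℝ)
    (hpsi : ∀ i, 0 < psi i) (hc : c 0 ≠ 0) :
    0 ≤ ∑ i, v i * zetaTilde psi c v i ∧
    ∑ i, v i * zetaTilde psi c v i ≤ psiMax psi * enorm v ^ 2 := by
  obtain ⟨hnonneg, hle⟩ := sum_mul_weighted_bounds_of_orthogonal (fun i => (hpsi i).le)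
    (sum_sub_residual_mul_psi_mul_residual v hpsi hc)
  refine ⟨hnonneg, hle.trans ?_⟩
  rw [enorm_sq]
  exact sum_mul_sq_le_sup'_mul_sum_sq _ psi v

/-- `g̃ = v^⊤ ζ̃` satisfies `0 ≤ g̃ ≤ ψ_max ‖v‖²`. -/
theorem gTilde_bounds
    (Sig : ℝ) (hSig : 0 < Sig) (psi c v : Fin 4 → ℝ)
    (hpsi : ∀ i, 0 < psi i) (hc : c 0 ≠ 0) :
    0 ≤ ∑ i, v i * zetaTilde psi c v i ∧
    ∑ i, v i * zetaTilde psi c v i ≤ psiMax psi * enorm v ^ 2 :=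
  gTilde_bounds_general psi c v hpsi hc

end Stmt10
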